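/- arXiv:2306.07566 — 3 statements merged into one kernel-verified Lean document; each statement's English description precedes it below -/
import Mathlib

section
/- Nuisance perturbation bound for weighted surrogate risk: let Φ be the hinge loss, let w, ŵ: X → ℝ be measurable, and let h: X → ℝ satisfy ‖h‖_∞ ≤ C. Then for every x, |ŵ(x)|·Φ(sgn(ŵ(x))h(x)) - |w(x)|·Φ(sgn(w(x))h(x)) ≤ (1 + C)·|ŵ(x) - w(x)|. Consequently sup_{‖h‖_∞ ≤ C} |E[|ŵ(X)|Φ(sgn(ŵ(X))h(X))] - E[|w(X)|Φ(sgn(w(X))h(X))]| ≤ (1 + C)·E|ŵ(X) - w(X)|. -/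
/-!
Since `|a| * sgn a = a`, the weighted loss `|a| * hinge (sgn a * t)` equals `max (|a| - a * t) 0`.
Truncation at `0` is `1`-Lipschitz and `a ↦ |a| - a * t` is `(1 + |t|)`-Lipschitz, so the weighted
loss is `(1 + C)`-Lipschitz in the weight when `|t| ≤ C`; integrating gives the risk bound.
-/

open MeasureTheory

/-- sign convention: `sgn t = 1` if `t ≥ 0`, and `-1` otherwise. -/
noncomputable def sgn (t : ℝ) : ℝ := if 0 ≤ t then 1 else -1

/-- hinge loss -/
noncomputable def hinge (α : ℝ) : ℝ := max (1 - α) 0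

lemma abs_mul_sgn (a : ℝ) : |a| * sgn a = a := by
  unfold sgn
  split_ifs with ha
  · rw [abs_of_nonneg ha, mul_one]
  · rw [abs_of_neg (not_le.mp ha), mul_neg_one, neg_neg]

lemma abs_mul_hinge_sgn_mul (a t : ℝ) : |a| * hinge (sgn a * t) = max (|a| - a * t) 0 := by
  rw [hinge, mul_max_of_nonneg _ _ (abs_nonneg a), mul_zero, mul_sub, mul_one, ← mul_assoc,
    abs_mul_sgn]

lemma abs_abs_mul_hinge_sgn_mul_sub_le (a b t : ℝ) :
    |(|a| * hinge (sgn a * t) - |b| * hinge (sgn b * t))| ≤ (1 + |t|) * |a - b| := by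
  rw [abs_mul_hinge_sgn_mul, abs_mul_hinge_sgn_mul]
  calc |max (|a| - a * t) 0 - max (|b| - b * t) 0|
      ≤ |(|a| - a * t) - (|b| - b * t)| := abs_max_sub_max_le_abs _ _ _
    _ = |(|a| - |b|) - (a - b) * t| := by ring_nf
    _ ≤ |(|a| - |b|)| + |(a - b) * t| := abs_sub _ _
    _ ≤ |a - b| + |a - b| * |t| := by
        rw [abs_mul]
        exact add_le_add_left (abs_abs_sub_abs_le_abs_sub a b) _
    _ = (1 + |t|) * |a - b| := by ring

lemma abs_abs_mul_hinge_sgn_mul_sub_le_of_abs_le {a b t C : ℝ} (ht : |t| ≤ C) :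
    |(|a| * hinge (sgn a * t) - |b| * hinge (sgn b * t))| ≤ (1 + C) * |a - b| :=
  (abs_abs_mul_hinge_sgn_mul_sub_le a b t).trans (by gcongr)

theorem stmt_13_general {𝓧 : Type*} [MeasurableSpace 𝓧]
    (μ : Measure 𝓧)
    (w wh : 𝓧 → ℝ)
    (C : ℝ) :
    (∀ h : 𝓧 → ℝ, (∀ x, |h x| ≤ C) → ∀ x,
      |wh x| * hinge (sgn (wh x) * h x) - |w x| * hinge (sgn (w x) * h x)
        ≤ (1 + C) * |wh x - w x|)
    ∧ (∀ h : 𝓧 → ℝ, Measurable h → (∀ x, |h x| ≤ C) →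
        Integrable (fun x => |wh x| * hinge (sgn (wh x) * h x)) μ →
        Integrable (fun x => |w x| * hinge (sgn (w x) * h x)) μ →
        Integrable (fun x => |wh x - w x|) μ →
        |(∫ x, |wh x| * hinge (sgn (wh x) * h x) ∂μ)
            - ∫ x, |w x| * hinge (sgn (w x) * h x) ∂μ|
          ≤ (1 + C) * ∫ x, |wh x - w x| ∂μ) := by
  refine ⟨fun h hh x ↦ (le_abs_self _).trans (abs_abs_mul_hinge_sgn_mul_sub_le_of_abs_le (hh x)),
    fun h _ hh hwh hw hdiff ↦ ?_⟩
  rw [← integral_sub hwh hw, ← integral_const_mul]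
  exact (abs_integral_le_integral_abs).trans <| integral_mono (hwh.sub hw).abs
    (hdiff.const_mul _) fun x ↦ abs_abs_mul_hinge_sgn_mul_sub_le_of_abs_le (hh x)

/-- nuisance perturbation bound for the weighted hinge surrogate risk:
pointwise, `|wh|Φ(sgn(wh)h) - |w|Φ(sgn(w)h) ≤ (1+C)|wh - w|` whenever `‖h‖_∞ ≤ C`; and
consequently the difference of the corresponding expected risks is bounded by
`(1+C)·E|wh - w|` uniformly over `‖h‖_∞ ≤ C`. -/
theorem stmt_13 {𝓧 : Type*} [MeasurableSpace 𝓧]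
    (μ : Measure 𝓧) [IsProbabilityMeasure μ]
    (w wh : 𝓧 → ℝ) (hwm : Measurable w) (hwhm : Measurable wh)
    (C : ℝ) (hC : 0 < C) :
    (∀ h : 𝓧 → ℝ, (∀ x, |h x| ≤ C) → ∀ x,
      |wh x| * hinge (sgn (wh x) * h x) - |w x| * hinge (sgn (w x) * h x)
        ≤ (1 + C) * |wh x - w x|)
    ∧ (∀ h : 𝓧 → ℝ, Measurable h → (∀ x, |h x| ≤ C) →
        Integrable (fun x => |wh x| * hinge (sgn (wh x) * h x)) μ →
        Integrable (fun x => |w x| * hinge (sgn (w x) * h x)) μ →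
        Integrable (fun x => |wh x - w x|) μ →
        |(∫ x, |wh x| * hinge (sgn (wh x) * h x) ∂μ)
            - ∫ x, |w x| * hinge (sgn (w x) * h x) ∂μ|
          ≤ (1 + C) * ∫ x, |wh x - w x| ∂μ) :=
  stmt_13_general μ w wh C
end

section
/- Massart's finite class lemma: let A ⊂ ℝⁿ be a finite set with r = sup_{x∈A} ‖x‖₂, and let σ₁,...,σₙ be independent Rademacher random variables (uniform on {−1,+1}). Then E[sup_{x∈A} (1/n)·Σᵢ σᵢxᵢ] ≤ r·√(2·log|A|)/n. -/
open MeasureTheory ProbabilityTheory Real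

/-! Each `Z_x = ∑ᵢ σᵢ xᵢ` is sub-Gaussian with parameter `‖x‖₂² ≤ r²` (Hoeffding's lemma for
the `σᵢ`, then independence). Jensen and a union bound inside the expectation give
`exp (t E[max_x Z_x]) ≤ E[max_x exp (t Z_x)] ≤ ∑_x E[exp (t Z_x)] ≤ |A| exp (r² t² / 2)`,
i.e. `t E[max_x Z_x] ≤ log |A| + r² t² / 2` for all `t`; optimizing in `t > 0` gives
`r √(2 log |A|)`. -/

lemma Real.le_sqrt_of_forall_mul_sub_le {a b c : ℝ} (hc : 0 ≤ c)
    (h : ∀ t > 0, a * t - c * t ^ 2 / 2 ≤ b) : a ≤ √(2 * c * b) := by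
  rcases le_or_gt a 0 with ha | ha
  · exact ha.trans (sqrt_nonneg _)
  rcases hc.eq_or_lt with rfl | hc
  · have := h ((|b| + 1) / a) (by positivity)
    rw [mul_div_cancel₀ _ ha.ne'] at this
    linarith [le_abs_self b]
  · refine le_sqrt_of_sq_le ?_
    have := h (a / c) (by positivity)
    field_simp at this
    nlinarith

lemma Real.exp_mul_sup'_le_sum {ι : Type*} {s : Finset ι} (hs : s.Nonempty) (f : ι → ℝ) (t : ℝ) :
    exp (t * s.sup' hs f) ≤ ∑ i ∈ s, exp (t * f i) := by
  obtain ⟨i, hi, hmax⟩ := s.exists_mem_eq_sup' hs f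
  rw [hmax]
  exact Finset.single_le_sum (fun j _ => (exp_pos (t * f j)).le) hi

lemma MeasureTheory.Integrable.finset_sup' {Ω ι : Type*} {mΩ : MeasurableSpace Ω}
    {μ : Measure Ω} {s : Finset ι} (hs : s.Nonempty) {f : ι → Ω → ℝ}
    (hf : ∀ i ∈ s, Integrable (f i) μ) : Integrable (fun ω => s.sup' hs fun i => f i ω) μ := by
  have := Finset.sup'_induction hs f (p := fun g => Integrable g μ)
    (fun _ hg₁ _ hg₂ => hg₁.sup hg₂) hf
  exact this.congr (ae_of_all _ fun ω => Finset.sup'_apply hs f ω)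

namespace ProbabilityTheory

variable {Ω : Type*} {mΩ : MeasurableSpace Ω} {μ : Measure Ω}

lemma HasSubgaussianMGF.mono {X : Ω → ℝ} {c c' : NNReal} (h : HasSubgaussianMGF X c μ)
    (hcc' : c ≤ c') : HasSubgaussianMGF X c' μ where
  integrable_exp_mul := h.integrable_exp_mul
  mgf_le t := (h.mgf_le t).trans <| exp_le_exp.mpr <| by gcongr

lemma integral_eq_zero_of_forall_eq_one_or_neg_one [IsProbabilityMeasure μ] {σ : Ω → ℝ}
    (hm : Measurable σ) (hv : ∀ ω, σ ω = 1 ∨ σ ω = -1) (hd : μ {ω | σ ω = 1} = 1 / 2) :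
    ∫ ω, σ ω ∂μ = 0 := by
  have hs : MeasurableSet {ω | σ ω = 1} := hm (measurableSet_singleton 1)
  calc ∫ ω, σ ω ∂μ = ∫ ω, (2 * {ω | σ ω = 1}.indicator (fun _ => 1) ω - 1) ∂μ :=
        integral_congr_ae <| ae_of_all _ fun ω => by
          rcases hv ω with h | h <;> simp [Set.indicator_apply, h] <;> norm_num
    _ = 2 * μ.real {ω | σ ω = 1} - 1 := by
        rw [integral_sub (((integrable_const (1 : ℝ)).indicator hs).const_mul 2)
          (integrable_const 1), integral_const_mul, integral_indicator_const _ hs]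
        simp
    _ = 0 := by simp [measureReal_def, hd]

lemma hasSubgaussianMGF_of_forall_eq_one_or_neg_one [IsProbabilityMeasure μ] {σ : Ω → ℝ}
    (hm : Measurable σ) (hv : ∀ ω, σ ω = 1 ∨ σ ω = -1) (hd : μ {ω | σ ω = 1} = 1 / 2) :
    HasSubgaussianMGF σ 1 μ := by
  have h := hasSubgaussianMGF_of_mem_Icc_of_integral_eq_zero (a := -1) (b := 1) hm.aemeasurable
    (ae_of_all _ fun ω => by rcases hv ω with h | h <;> simp [h])
    (integral_eq_zero_of_forall_eq_one_or_neg_one hm hv hd)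
  convert h
  ext
  norm_num

lemma HasSubgaussianMGF.sum_mul_of_iIndepFun {ι : Type*} [Fintype ι] {σ : ι → Ω → ℝ}
    (h_indep : iIndepFun σ μ) (hσ : ∀ i, HasSubgaussianMGF (σ i) 1 μ) (x : ι → ℝ) {c : NNReal}
    (hc : ∑ i, x i ^ 2 ≤ c) : HasSubgaussianMGF (fun ω => ∑ i, σ i ω * x i) c μ := by
  have h_indep' : iIndepFun (fun i ω => x i * σ i ω) μ :=
    h_indep.comp (fun i => (x i * ·)) fun i => measurable_const_mul _
  have hsum := sum_of_iIndepFun h_indep' (s := Finset.univ)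
    (c := fun i => (⟨x i ^ 2, sq_nonneg _⟩ : NNReal))
    fun i _ => ((hσ i).const_mul (x i)).mono (mul_one _).le
  exact (hsum.congr (ae_of_all _ fun ω => by simp only [mul_comm])).mono
    (NNReal.coe_le_coe.mp ((NNReal.coe_sum _ _).trans_le hc))

section Maximal

variable [IsProbabilityMeasure μ] {ι : Type*} {s : Finset ι} (hs : s.Nonempty)
  {X : ι → Ω → ℝ} {c : NNReal}

lemma HasSubgaussianMGF.mul_integral_sup'_le (h : ∀ i ∈ s, HasSubgaussianMGF (X i) c μ) (t : ℝ) :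
    t * ∫ ω, s.sup' hs (fun i => X i ω) ∂μ ≤ log s.card + c * t ^ 2 / 2 := by
  set M := fun ω => s.sup' hs fun i => X i ω
  have hM : Integrable M μ := Integrable.finset_sup' hs fun i hi => (h i hi).integrable
  have hsum : Integrable (fun ω => ∑ i ∈ s, exp (t * X i ω)) μ :=
    integrable_finsetSum _ fun i hi => (h i hi).integrable_exp_mul t
  have hexpM : Integrable (fun ω => exp (t * M ω)) μ :=
    hsum.mono' (continuous_exp.comp_aestronglyMeasurable
      (hM.aestronglyMeasurable.const_mul t)) (ae_of_all _ fun ω => by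
      rw [norm_of_nonneg (exp_pos _).le]
      exact exp_mul_sup'_le_sum hs _ t)
  have hpos : 0 < (s.card : ℝ) := by exact_mod_cast hs.card_pos
  suffices exp (t * ∫ ω, M ω ∂μ) ≤ s.card * exp (c * t ^ 2 / 2) by
    rw [← log_exp (t * _), ← log_exp (c * t ^ 2 / 2), ← log_mul hpos.ne' (exp_pos _).ne']
    exact log_le_log (exp_pos _) this
  calc exp (t * ∫ ω, M ω ∂μ) = exp (∫ ω, t * M ω ∂μ) := by rw [integral_const_mul]
    _ ≤ ∫ ω, exp (t * M ω) ∂μ := convexOn_exp.map_integral_le continuous_exp.continuousOn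
        isClosed_univ (ae_of_all _ fun _ => Set.mem_univ _) (hM.const_mul t) hexpM
    _ ≤ ∫ ω, ∑ i ∈ s, exp (t * X i ω) ∂μ :=
        integral_mono hexpM hsum fun ω => exp_mul_sup'_le_sum hs _ t
    _ = ∑ i ∈ s, mgf (X i) μ t := integral_finsetSum _ fun i hi => (h i hi).integrable_exp_mul t
    _ ≤ ∑ _i ∈ s, exp (c * t ^ 2 / 2) := Finset.sum_le_sum fun i hi => (h i hi).mgf_le t
    _ = s.card * exp (c * t ^ 2 / 2) := by rw [Finset.sum_const, nsmul_eq_mul]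

lemma HasSubgaussianMGF.integral_sup'_le (h : ∀ i ∈ s, HasSubgaussianMGF (X i) c μ) :
    ∫ ω, s.sup' hs (fun i => X i ω) ∂μ ≤ √(2 * c * log s.card) :=
  le_sqrt_of_forall_mul_sub_le c.2 fun t _ => by
    linarith [mul_comm t (∫ ω, s.sup' hs (fun i => X i ω) ∂μ), mul_integral_sup'_le hs h t]

end Maximal

end ProbabilityTheory

theorem stmt_14_general {Ω : Type*} [MeasurableSpace Ω]
    (μ : Measure Ω) [IsProbabilityMeasure μ]
    (n : ℕ)
    (σ : Fin n → Ω → ℝ)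
    (hσmeas : ∀ i, Measurable (σ i))
    (hσindep : iIndepFun σ μ)
    (hσval : ∀ i, ∀ ω, σ i ω = 1 ∨ σ i ω = -1)
    (hσdist : ∀ i, μ {ω | σ i ω = 1} = 1 / 2)
    (A : Finset (Fin n → ℝ)) (hA : A.Nonempty)
    (r : ℝ) (hr : ∀ x ∈ A, Real.sqrt (∑ i, (x i) ^ 2) ≤ r) :
    ∫ ω, A.sup' hA (fun x => (1 / (n : ℝ)) * ∑ i, σ i ω * x i) ∂μ
      ≤ r * Real.sqrt (2 * Real.log (A.card : ℝ)) / n := by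
  have hr0 : 0 ≤ r := (sqrt_le_iff.mp (hr _ hA.choose_spec)).1
  have hZ : ∀ x ∈ A, HasSubgaussianMGF (fun ω => ∑ i, σ i ω * x i) ⟨r ^ 2, sq_nonneg r⟩ μ :=
    fun x hx => .sum_mul_of_iIndepFun hσindep
      (fun i => hasSubgaussianMGF_of_forall_eq_one_or_neg_one (hσmeas i) (hσval i) (hσdist i)) x
      (sqrt_le_iff.mp (hr x hx)).2
  have hscale : ∀ ω, A.sup' hA (fun x => 1 / (n : ℝ) * ∑ i, σ i ω * x i)
      = 1 / (n : ℝ) * A.sup' hA (fun x => ∑ i, σ i ω * x i) := fun ω => by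
    simp_rw [mul_comm (1 / (n : ℝ))]
    exact (Finset.sup'_mul₀ (by positivity) _ _ _).symm
  calc ∫ ω, A.sup' hA (fun x => 1 / (n : ℝ) * ∑ i, σ i ω * x i) ∂μ
      = 1 / (n : ℝ) * ∫ ω, A.sup' hA (fun x => ∑ i, σ i ω * x i) ∂μ := by
        simp_rw [hscale, integral_const_mul]
    _ ≤ 1 / (n : ℝ) * √(2 * r ^ 2 * log A.card) := by
        gcongr
        exact HasSubgaussianMGF.integral_sup'_le hA hZ
    _ = r * √(2 * log A.card) / n := by
        rw [show 2 * r ^ 2 * log A.card = r ^ 2 * (2 * log A.card) by ring,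
          sqrt_mul (sq_nonneg r), sqrt_sq hr0]
        ring

/-- Massart's finite class lemma. For a finite nonempty `A ⊆ ℝⁿ` with
`‖x‖₂ ≤ r` for all `x ∈ A`, and independent Rademacher variables `σ₁,…,σₙ`,
`E[sup_{x ∈ A} (1/n)·Σᵢ σᵢ xᵢ] ≤ r·√(2 log|A|)/n`. -/
theorem stmt_14 {Ω : Type*} [MeasurableSpace Ω]
    (μ : Measure Ω) [IsProbabilityMeasure μ]
    (n : ℕ) (hn : 0 < n)
    (σ : Fin n → Ω → ℝ)
    (hσmeas : ∀ i, Measurable (σ i))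
    (hσindep : iIndepFun σ μ)
    (hσval : ∀ i, ∀ ω, σ i ω = 1 ∨ σ i ω = -1)
    (hσdist : ∀ i, μ {ω | σ i ω = 1} = 1 / 2)
    (A : Finset (Fin n → ℝ)) (hA : A.Nonempty)
    (r : ℝ) (hr : ∀ x ∈ A, Real.sqrt (∑ i, (x i) ^ 2) ≤ r) :
    ∫ ω, A.sup' hA (fun x => (1 / (n : ℝ)) * ∑ i, σ i ω * x i) ∂μ
      ≤ r * Real.sqrt (2 * Real.log (A.card : ℝ)) / n :=
  stmt_14_general μ n σ hσmeas hσindep hσval hσdist A hA r hr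
end

section
/- Linear-programming partial bounds with a binary instrument: let p_{11,z} = P(Y=1, D=1 | Z=z), p_{na,z} = P(D=0 | Z=z) for z ∈ {0,1}. Suppose the joint distribution arises from latent response types q_{kj} ≥ 0 (k ∈ {0,1,2,3}, j ∈ {0,1}) with Σ q_{kj} = 1, E[Y*] = q_{01}+q_{11}+q_{21}+q_{31}, p_{na,0} = q_{00}+q_{01}+q_{10}+q_{11}, p_{11,0} = q_{21}+q_{31}, p_{na,1} = q_{00}+q_{01}+q_{20}+q_{21}, p_{11,1} = q_{11}+q_{31}. Then max{p_{11,0}, p_{11,1}} ≤ E[Y*] ≤ min{p_{11,0}+p_{na,0}, p_{11,1}+p_{na,1}}. -/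
-- Each gap between `EY` and a bound is a sum of two response-type masses.
theorem stmt_19_general (q : Fin 4 → Fin 2 → ℝ)
    (hq : ∀ k j, 0 ≤ q k j)
    (EY p110 p111 pna0 pna1 : ℝ)
    (hEY : EY = q 0 1 + q 1 1 + q 2 1 + q 3 1)
    (hna0 : pna0 = q 0 0 + q 0 1 + q 1 0 + q 1 1)
    (h110 : p110 = q 2 1 + q 3 1)
    (hna1 : pna1 = q 0 0 + q 0 1 + q 2 0 + q 2 1)
    (h111 : p111 = q 1 1 + q 3 1) :
    max p110 p111 ≤ EY ∧ EY ≤ min (p110 + pna0) (p111 + pna1) := by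
  refine ⟨max_le ?_ ?_, le_min ?_ ?_⟩
  · linarith [hq 0 1, hq 1 1]
  · linarith [hq 0 1, hq 2 1]
  · linarith [hq 0 0, hq 1 0]
  · linarith [hq 0 0, hq 2 0]

/-- Balke–Pearl-type linear programming bounds with a binary instrument.
Given latent response-type probabilities `q k j ≥ 0` summing to one, with
`E[Y*] = q₀₁+q₁₁+q₂₁+q₃₁`, `p_{na,0} = q₀₀+q₀₁+q₁₀+q₁₁`, `p_{11,0} = q₂₁+q₃₁`,
`p_{na,1} = q₀₀+q₀₁+q₂₀+q₂₁`, `p_{11,1} = q₁₁+q₃₁`, we have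
`max(p_{11,0}, p_{11,1}) ≤ E[Y*] ≤ min(p_{11,0}+p_{na,0}, p_{11,1}+p_{na,1})`. -/
theorem stmt_19 (q : Fin 4 → Fin 2 → ℝ)
    (hq : ∀ k j, 0 ≤ q k j)
    (hsum : ∑ k, ∑ j, q k j = 1)
    (EY p110 p111 pna0 pna1 : ℝ)
    (hEY : EY = q 0 1 + q 1 1 + q 2 1 + q 3 1)
    (hna0 : pna0 = q 0 0 + q 0 1 + q 1 0 + q 1 1)
    (h110 : p110 = q 2 1 + q 3 1)
    (hna1 : pna1 = q 0 0 + q 0 1 + q 2 0 + q 2 1)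
    (h111 : p111 = q 1 1 + q 3 1) :
    max p110 p111 ≤ EY ∧ EY ≤ min (p110 + pna0) (p111 + pna1) :=
  stmt_19_general q hq EY p110 p111 pna0 pna1 hEY hna0 h110 hna1 h111
end
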